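/- arXiv:math/0111209 — 5 statements merged into one kernel-verified Lean document; each statement's English description precedes it below -/
import Mathlib

section
/- If two smooth functions H, H' on a symplectic 2n-manifold generate the same Hamiltonian vector field (so H - H' is locally constant), and N is a closed oriented null-homologous codimension-2 submanifold, then n∫_N H ω^{n-1} = n∫_N H' ω^{n-1}. -/
/- Since `ω` is closed and `d` is a graded derivation, every positive power of `ω` is closed, so
`d (H ω^{n-1}) = dH ω^{n-1}`.  As `N` bounds `S`, `∫_N H ω^{n-1} = ∫_S dH ω^{n-1}`, which depends
on `H` only through `dH`. -/

section GradedDerivation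

variable {R A : Type*} [CommRing R] [Ring A] [Algebra R A] {Gr : ℕ → Submodule R A}
  {d : A →ₗ[R] A}

theorem d_mul_eq_d_mul_of_d_eq_zero
    (hleib : ∀ (i : ℕ) (x y : A), x ∈ Gr i → d (x * y) = d x * y + ((-1 : R) ^ i) • (x * d y))
    {i : ℕ} {x y : A} (hx : x ∈ Gr i) (hy : d y = 0) : d (x * y) = d x * y := by
  rw [hleib i x y hx, hy, mul_zero, smul_zero, add_zero]

theorem d_pow_succ_eq_zero
    (hleib : ∀ (i : ℕ) (x y : A), x ∈ Gr i → d (x * y) = d x * y + ((-1 : R) ^ i) • (x * d y))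
    {i : ℕ} {ω : A} (hω : ω ∈ Gr i) (hωclosed : d ω = 0) (k : ℕ) : d (ω ^ (k + 1)) = 0 := by
  induction k with
  | zero => rwa [pow_one]
  | succ k ih => rw [pow_succ', d_mul_eq_d_mul_of_d_eq_zero hleib hω ih, hωclosed, zero_mul]

theorem d_mul_pow_eq_d_mul_pow
    (hleib : ∀ (i : ℕ) (x y : A), x ∈ Gr i → d (x * y) = d x * y + ((-1 : R) ^ i) • (x * d y))
    {i j : ℕ} {x ω : A} (hx : x ∈ Gr i) (hω : ω ∈ Gr j) (hωclosed : d ω = 0) (k : ℕ) :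
    d (x * ω ^ k) = d x * ω ^ k := by
  cases k with
  | zero => simp only [pow_zero, mul_one]
  | succ k => exact d_mul_eq_d_mul_of_d_eq_zero hleib hx (d_pow_succ_eq_zero hleib hω hωclosed k)

end GradedDerivation

theorem linking_number_independent_of_hamiltonian_general
    (n : ℕ)
    (A : Type) [Ring A] [Algebra ℝ A]
    (Gr : ℕ → Submodule ℝ A)
    (d : A →ₗ[ℝ] A)
    (hleib : ∀ (i : ℕ) (x y : A), x ∈ Gr i →
      d (x * y) = d x * y + ((-1 : ℝ) ^ i) • (x * d y))
    (ω H H' : A)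
    (hω : ω ∈ Gr 2) (hωclosed : d ω = 0)
    (hH : H ∈ Gr 0) (hH' : H' ∈ Gr 0)
    (hsame : d H = d H')                           -- same Hamiltonian vector field
    (intN intS : A →ₗ[ℝ] ℝ)
    (hnullhom : ∀ x : A, intN x = intS (d x)) :    -- N null-homologous over ℝ
    intN ((n : ℝ) • (H * ω ^ (n - 1))) = intN ((n : ℝ) • (H' * ω ^ (n - 1))) := by
  rw [map_smul, map_smul, hnullhom, hnullhom, d_mul_pow_eq_d_mul_pow hleib hH hω hωclosed,
    d_mul_pow_eq_d_mul_pow hleib hH' hω hωclosed, hsame]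

theorem linking_number_independent_of_hamiltonian
    (n : ℕ) (hn : 1 ≤ n)
    (A : Type) [Ring A] [Algebra ℝ A]
    (Gr : ℕ → Submodule ℝ A)
    (d : A →ₗ[ℝ] A)
    (hd2 : ∀ x : A, d (d x) = 0)
    (hdmem : ∀ (j : ℕ) (x : A), x ∈ Gr j → d x ∈ Gr (j + 1))
    (hmul : ∀ (i j : ℕ) (x y : A), x ∈ Gr i → y ∈ Gr j → x * y ∈ Gr (i + j))
    (hleib : ∀ (i : ℕ) (x y : A), x ∈ Gr i →
      d (x * y) = d x * y + ((-1 : ℝ) ^ i) • (x * d y))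
    (ω H H' : A)
    (hω : ω ∈ Gr 2) (hωclosed : d ω = 0)
    (hH : H ∈ Gr 0) (hH' : H' ∈ Gr 0)
    (hsame : d H = d H')                           -- same Hamiltonian vector field
    (intN intS : A →ₗ[ℝ] ℝ)
    (hnullhom : ∀ x : A, intN x = intS (d x)) :    -- N null-homologous over ℝ
    intN ((n : ℝ) • (H * ω ^ (n - 1))) = intN ((n : ℝ) • (H' * ω ^ (n - 1))) :=
  linking_number_independent_of_hamiltonian_general n A Gr d hleib ω H H' hω hωclosed hH hH' hsame
    intN intS hnullhom
end

section
/- Consider M = S³ × S³ ⊂ ℂ² × ℂ² and f : M → ℂ, f(z,w) = z₀·conj(w₀) + z₁·conj(w₁). Then 0 is a regular value of f, so N = f⁻¹(0) is a smooth 4-dimensional submanifold of M, and the map S³ × S¹ → N sending ((z₀,z₁), λ) to ((z₀,z₁), (λ·conj(z₁), -λ·conj(z₀))) is a diffeomorphism. -/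
open Complex

/-- The Hermitian pairing f(z,w) = z₀·conj(w₀) + z₁·conj(w₁) on ℂ² × ℂ². -/
noncomputable def hermPairing (p : (ℂ × ℂ) × (ℂ × ℂ)) : ℂ :=
  p.1.1 * (starRingEnd ℂ) p.2.1 + p.1.2 * (starRingEnd ℂ) p.2.2

/-- The unit sphere S³ ⊂ ℂ². -/
def sphere3 : Set (ℂ × ℂ) := {z | Complex.normSq z.1 + Complex.normSq z.2 = 1}

/-- The unit circle S¹ ⊂ ℂ. -/
def circle1 : Set ℂ := {l | Complex.normSq l = 1}

/-- v is a tangent vector of S³ at z (z ∈ S³): re⟨v,z⟩ = 0. -/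
def tangentS3 (z v : ℂ × ℂ) : Prop :=
  (v.1 * (starRingEnd ℂ) z.1 + v.2 * (starRingEnd ℂ) z.2).re = 0

/-- The map S³ × S¹ → N, ((z₀,z₁),λ) ↦ ((z₀,z₁),(λ·conj z₁, -λ·conj z₀)). -/
noncomputable def nParam (p : (ℂ × ℂ) × ℂ) : (ℂ × ℂ) × (ℂ × ℂ) :=
  (p.1, (p.2 * (starRingEnd ℂ) p.1.2, -(p.2 * (starRingEnd ℂ) p.1.1)))

/-- Inverse map (z,w) ↦ (z, w₀z₁ - w₁z₀) of `nParam` on N. -/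
noncomputable def nParamInv (q : (ℂ × ℂ) × (ℂ × ℂ)) : (ℂ × ℂ) × ℂ :=
  (q.1, q.2.1 * q.1.2 - q.2.2 * q.1.1)

section Aux

open ContinuousLinearMap

lemma aux_fderiv_hermPairing (q v : (ℂ × ℂ) × (ℂ × ℂ)) :
    fderiv ℝ hermPairing q v =
      v.1.1 * (starRingEnd ℂ) q.2.1 + q.1.1 * (starRingEnd ℂ) v.2.1 +
      (v.1.2 * (starRingEnd ℂ) q.2.2 + q.1.2 * (starRingEnd ℂ) v.2.2) := by
  have h11 : HasFDerivAt (fun p : (ℂ × ℂ) × (ℂ × ℂ) => p.1.1)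
      ((fst ℝ ℂ ℂ).comp (fst ℝ (ℂ × ℂ) (ℂ × ℂ))) q :=
    ((fst ℝ ℂ ℂ).comp (fst ℝ (ℂ × ℂ) (ℂ × ℂ))).hasFDerivAt
  have h12 : HasFDerivAt (fun p : (ℂ × ℂ) × (ℂ × ℂ) => p.1.2)
      ((snd ℝ ℂ ℂ).comp (fst ℝ (ℂ × ℂ) (ℂ × ℂ))) q :=
    ((snd ℝ ℂ ℂ).comp (fst ℝ (ℂ × ℂ) (ℂ × ℂ))).hasFDerivAt
  have h21 : HasFDerivAt (fun p : (ℂ × ℂ) × (ℂ × ℂ) => (starRingEnd ℂ) p.2.1)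
      (Complex.conjCLE.toContinuousLinearMap.comp ((fst ℝ ℂ ℂ).comp (snd ℝ (ℂ × ℂ) (ℂ × ℂ)))) q :=
    (Complex.conjCLE.toContinuousLinearMap.comp ((fst ℝ ℂ ℂ).comp (snd ℝ (ℂ × ℂ) (ℂ × ℂ)))).hasFDerivAt
  have h22 : HasFDerivAt (fun p : (ℂ × ℂ) × (ℂ × ℂ) => (starRingEnd ℂ) p.2.2)
      (Complex.conjCLE.toContinuousLinearMap.comp ((snd ℝ ℂ ℂ).comp (snd ℝ (ℂ × ℂ) (ℂ × ℂ)))) q :=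
    (Complex.conjCLE.toContinuousLinearMap.comp ((snd ℝ ℂ ℂ).comp (snd ℝ (ℂ × ℂ) (ℂ × ℂ)))).hasFDerivAt
  have hD : HasFDerivAt hermPairing _ q := (h11.mul h21).add (h12.mul h22)
  rw [hD.fderiv]
  simp [ContinuousLinearMap.add_apply, ContinuousLinearMap.smul_apply,
    ContinuousLinearMap.comp_apply, smul_eq_mul]
  ring

lemma aux_sphere_complex {z : ℂ × ℂ} (hz : z ∈ sphere3) :
    z.1 * (starRingEnd ℂ) z.1 + z.2 * (starRingEnd ℂ) z.2 = 1 := by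
  rw [Complex.mul_conj, Complex.mul_conj]
  exact_mod_cast hz

end Aux

/- Let M = S³ × S³ ⊂ ℂ² × ℂ² and f(z,w) = z₀·conj(w₀) + z₁·conj(w₁).  Then f is
(ℝ-)smooth, 0 is a regular value of f restricted to M (the differential of f maps
the tangent space of M onto ℂ at each point of N = f⁻¹(0) ∩ M), and the map
nParam : S³ × S¹ → N is a diffeomorphism: it is smooth, a bijection onto N, and
its inverse nParamInv is smooth. -/
theorem s3s3_hermitian_zero_regular_and_diffeo :
    let Mset : Set ((ℂ × ℂ) × (ℂ × ℂ)) := sphere3 ×ˢ sphere3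
    let N : Set ((ℂ × ℂ) × (ℂ × ℂ)) := {q ∈ Mset | hermPairing q = 0}
    ContDiff ℝ (⊤ : ℕ∞) hermPairing ∧
    (∀ q ∈ N, ∀ c : ℂ, ∃ v : (ℂ × ℂ) × (ℂ × ℂ),
        tangentS3 q.1 v.1 ∧ tangentS3 q.2 v.2 ∧
        fderiv ℝ hermPairing q v = c) ∧
    Set.BijOn nParam (sphere3 ×ˢ circle1) N ∧
    ContDiff ℝ (⊤ : ℕ∞) nParam ∧
    ContDiff ℝ (⊤ : ℕ∞) nParamInv ∧
    Set.InvOn nParamInv nParam (sphere3 ×ˢ circle1) N := by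
  intro Mset N
  have hc : ContDiff ℝ (⊤ : ℕ∞) (starRingEnd ℂ : ℂ → ℂ) := Complex.conjCLE.contDiff
  -- smoothness of hermPairing
  have hsm : ContDiff ℝ (⊤ : ℕ∞) hermPairing :=
    (contDiff_fst.fst.mul (hc.comp contDiff_snd.fst)).add
      (contDiff_fst.snd.mul (hc.comp contDiff_snd.snd))
  -- left inverse
  have hleft : Set.LeftInvOn nParamInv nParam (sphere3 ×ˢ circle1) := by
    rintro ⟨z, l⟩ ⟨hz, hl⟩
    have hz' := aux_sphere_complex hz
    simp only [nParam, nParamInv, Prod.mk.injEq]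
    refine ⟨trivial, ?_⟩
    linear_combination l * hz'
  -- nParam maps into N
  have hmapsto : Set.MapsTo nParam (sphere3 ×ˢ circle1) N := by
    rintro ⟨z, l⟩ ⟨hz, hl⟩
    refine ⟨⟨hz, ?_⟩, ?_⟩
    · show Complex.normSq (l * (starRingEnd ℂ) z.2) +
        Complex.normSq (-(l * (starRingEnd ℂ) z.1)) = 1
      simp only [Complex.normSq_neg, Complex.normSq_mul, Complex.normSq_conj]
      have hz1 : Complex.normSq z.1 + Complex.normSq z.2 = 1 := hz
      have hl1 : Complex.normSq l = 1 := hl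
      nlinarith [hz1, hl1]
    · show z.1 * (starRingEnd ℂ) (l * (starRingEnd ℂ) z.2) +
        z.2 * (starRingEnd ℂ) (-(l * (starRingEnd ℂ) z.1)) = 0
      simp only [map_mul, map_neg, Complex.conj_conj]
      ring
  -- key identities on N
  have hkey : ∀ q ∈ N, q.2.1 = (q.2.1 * q.1.2 - q.2.2 * q.1.1) * (starRingEnd ℂ) q.1.2 ∧
      q.2.2 = -((q.2.1 * q.1.2 - q.2.2 * q.1.1) * (starRingEnd ℂ) q.1.1) := by
    rintro ⟨z, w⟩ ⟨⟨hz, hw⟩, hf⟩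
    have hz' := aux_sphere_complex hz
    have hf' : (starRingEnd ℂ) z.1 * w.1 + (starRingEnd ℂ) z.2 * w.2 = 0 := by
      have h := congrArg (starRingEnd ℂ) hf
      simp only [hermPairing, map_add, map_mul, Complex.conj_conj, map_zero] at h
      linear_combination h
    constructor
    · linear_combination z.1 * hf' - w.1 * hz'
    · linear_combination z.2 * hf' - w.2 * hz'
  -- nParamInv maps N into sphere3 ×ˢ circle1
  have hmapsfrom : Set.MapsTo nParamInv N (sphere3 ×ˢ circle1) := by
    rintro ⟨z, w⟩ hq
    obtain ⟨h0, h1⟩ := hkey ⟨z, w⟩ hq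
    obtain ⟨⟨hz, hw⟩, hf⟩ := hq
    refine ⟨hz, ?_⟩
    show Complex.normSq (w.1 * z.2 - w.2 * z.1) = 1
    have h0' : w.1 = (w.1 * z.2 - w.2 * z.1) * (starRingEnd ℂ) z.2 := h0
    have h1' : w.2 = -((w.1 * z.2 - w.2 * z.1) * (starRingEnd ℂ) z.1) := h1
    have e0 : Complex.normSq w.1 =
        Complex.normSq (w.1 * z.2 - w.2 * z.1) * Complex.normSq z.2 := by
      conv_lhs => rw [h0']
      rw [Complex.normSq_mul, Complex.normSq_conj]
    have e1 : Complex.normSq w.2 =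
        Complex.normSq (w.1 * z.2 - w.2 * z.1) * Complex.normSq z.1 := by
      conv_lhs => rw [h1']
      rw [Complex.normSq_neg, Complex.normSq_mul, Complex.normSq_conj]
    have hz1 : Complex.normSq z.1 + Complex.normSq z.2 = 1 := hz
    have hw1 : Complex.normSq w.1 + Complex.normSq w.2 = 1 := hw
    nlinarith [e0, e1, hz1, hw1]
  -- right inverse
  have hright : Set.RightInvOn nParamInv nParam N := by
    rintro ⟨z, w⟩ hq
    obtain ⟨h0, h1⟩ := hkey ⟨z, w⟩ hq
    exact Prod.ext rfl (Prod.ext h0.symm h1.symm)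
  have hinv : Set.InvOn nParamInv nParam (sphere3 ×ˢ circle1) N := ⟨hleft, hright⟩
  refine ⟨hsm, ?_, hinv.bijOn hmapsto hmapsfrom, ?_, ?_, hinv⟩
  · -- regular value
    rintro q ⟨⟨hz, hw⟩, hf⟩ c
    refine ⟨((c * q.2.1, c * q.2.2), (0, 0)), ?_, ?_, ?_⟩
    · show (c * q.2.1 * (starRingEnd ℂ) q.1.1 + c * q.2.2 * (starRingEnd ℂ) q.1.2).re = 0
      have : c * q.2.1 * (starRingEnd ℂ) q.1.1 + c * q.2.2 * (starRingEnd ℂ) q.1.2 =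
          c * (starRingEnd ℂ) (hermPairing q) := by
        simp only [hermPairing, map_add, map_mul, Complex.conj_conj]; ring
      rw [this, hf]
      simp
    · show ((0 : ℂ) * (starRingEnd ℂ) q.2.1 + (0 : ℂ) * (starRingEnd ℂ) q.2.2).re = 0
      simp
    · rw [aux_fderiv_hermPairing]
      have hw' := aux_sphere_complex hw
      simp only [map_zero, mul_zero, add_zero]
      linear_combination c * hw'
  · -- smoothness of nParam
    exact contDiff_fst.prodMk
      ((contDiff_snd.mul (hc.comp contDiff_fst.snd)).prodMk
        (contDiff_snd.mul (hc.comp contDiff_fst.fst)).neg)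
  · -- smoothness of nParamInv
    exact contDiff_fst.prodMk
      ((contDiff_snd.fst.mul contDiff_fst.snd).sub (contDiff_snd.snd.mul contDiff_fst.fst))
end

section
/- With M = S³ × S³, f(z,w) = z₀·conj(w₀) + z₁·conj(w₁), the map f is transversal to the ray [0,∞) ⊂ ℂ: at any point (z,w) with f(z,w) = c > 0, the derivative of t ↦ f(e^{it}z, w) at t = 0 equals ic, which together with the regularity of 0 implies f⁻¹([0,∞)) is a 5-dimensional submanifold with boundary N = f⁻¹(0). -/
/-!
Multiplying `z` by `e^{it}` multiplies `f(z, w)` by `e^{it}`, since `f` is complex linear in its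
first argument; so along this circle through a point with `f = c` the derivative at `t = 0` is
`i c`. Its velocity `(i z, 0)` is tangent to `S³ × S³`, because rotations preserve every sphere
about the origin, and `f` is real bilinear, so its differential sends `(i z, 0)` to `f(i z, w) = i c`.
-/

open Complex

theorem hermPairing_mul_left (a : ℂ) (z w : ℂ × ℂ) :
    hermPairing ((a * z.1, a * z.2), w) = a * hermPairing (z, w) := by
  simp only [hermPairing]
  ring

theorem tangentS3_I_mul (z : ℂ × ℂ) : tangentS3 z (I * z.1, I * z.2) := by
  simp [tangentS3, mul_assoc, mul_conj, ← mul_add]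

theorem fderiv_hermPairing_apply (p v : (ℂ × ℂ) × (ℂ × ℂ)) :
    fderiv ℝ hermPairing p v = hermPairing (v.1, p.2) + hermPairing (p.1, v.2) := by
  have h : HasFDerivAt hermPairing _ p :=
    ((hasFDerivAt_fst.comp p hasFDerivAt_fst).mul
      (conjCLE.hasFDerivAt.comp p (hasFDerivAt_fst.comp p hasFDerivAt_snd))).add
    ((hasFDerivAt_snd.comp p hasFDerivAt_fst).mul
      (conjCLE.hasFDerivAt.comp p (hasFDerivAt_snd.comp p hasFDerivAt_snd)))
  rw [h.fderiv]
  simp [hermPairing]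
  ring

theorem hasDerivAt_exp_I_mul_ofReal_mul (c : ℂ) (t : ℝ) :
    HasDerivAt (fun s : ℝ => exp (I * s) * c) (I * exp (I * t) * c) t := by
  have := (((hasDerivAt_id (t : ℂ)).const_mul I).cexp.mul_const c).comp_ofReal
  simpa [mul_comm] using this

theorem s3s3_hermitian_transversal_to_ray_general
    (z w : ℂ × ℂ)
    (c : ℝ) (hfc : hermPairing (z, w) = (c : ℂ)) :
    HasDerivAt
      (fun t : ℝ =>
        hermPairing ((Complex.exp (Complex.I * (t : ℂ)) * z.1,
                      Complex.exp (Complex.I * (t : ℂ)) * z.2), w))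
      (Complex.I * (c : ℂ)) 0 ∧
    ∃ v : (ℂ × ℂ) × (ℂ × ℂ),
      tangentS3 z v.1 ∧ tangentS3 w v.2 ∧
      fderiv ℝ hermPairing (z, w) v = Complex.I * (c : ℂ) := by
  refine ⟨?_, ((I * z.1, I * z.2), 0), tangentS3_I_mul z, by simp [tangentS3], ?_⟩
  · simp_rw [hermPairing_mul_left, hfc]
    simpa using hasDerivAt_exp_I_mul_ofReal_mul (c : ℂ) 0
  · rw [fderiv_hermPairing_apply, hermPairing_mul_left, hfc]
    simp [hermPairing]

theorem s3s3_hermitian_transversal_to_ray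
    (z w : ℂ × ℂ) (hz : z ∈ sphere3) (hw : w ∈ sphere3)
    (c : ℝ) (hc : 0 < c) (hfc : hermPairing (z, w) = (c : ℂ)) :
    HasDerivAt
      (fun t : ℝ =>
        hermPairing ((Complex.exp (Complex.I * (t : ℂ)) * z.1,
                      Complex.exp (Complex.I * (t : ℂ)) * z.2), w))
      (Complex.I * (c : ℂ)) 0 ∧
    ∃ v : (ℂ × ℂ) × (ℂ × ℂ),
      tangentS3 z v.1 ∧ tangentS3 w v.2 ∧
      fderiv ℝ hermPairing (z, w) v = Complex.I * (c : ℂ) :=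
  s3s3_hermitian_transversal_to_ray_general z w c hfc
end

section
/- Let φ_t(z,w) = (e^{iat}z, e^{ibt}w) be the flow on S³ × S³ of the vector field aH₁ + bH₂ (H_i the Hopf field on the i-th factor). Then ⟨z(t), w(t)⟩ = e^{i(a-b)t}⟨z,w⟩ along flow lines; consequently, if a ≠ b, every flow line starting at a point with ⟨z,w⟩ ≠ 0 crosses the set {⟨z,w⟩ ∈ (0,∞)} exactly once in each time interval of length 2π/|a-b|, and the asymptotic linking number of the flow line with N = {⟨z,w⟩ = 0} equals (a-b)/(2π). -/
/-! The pairing turns at constant angular speed `a - b`, so the flow line meets the positive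
ray exactly at the times `s` with `(a - b) s + arg ⟨z,w⟩ ∈ 2πℤ`: an arithmetic progression of
step `P = 2π/|a-b|`. Such a progression has one point in every window `[t₀, t₀ + P)` and
`T/P + O(1)` points in `(0, T]`; the sign of `a - b` is the orientation of the crossings. -/

open Complex Filter

/-- The flow of aH₁ + bH₂ on S³ × S³: (z,w) ↦ (e^{iat}z, e^{ibt}w). -/
noncomputable def hopfFlow (a b t : ℝ) (p : (ℂ × ℂ) × (ℂ × ℂ)) :
    (ℂ × ℂ) × (ℂ × ℂ) :=
  ((Complex.exp (Complex.I * (a * t : ℝ)) * p.1.1,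
    Complex.exp (Complex.I * (a * t : ℝ)) * p.1.2),
   (Complex.exp (Complex.I * (b * t : ℝ)) * p.2.1,
    Complex.exp (Complex.I * (b * t : ℝ)) * p.2.2))

/-- The crossing condition: ⟨z,w⟩ lies on the positive real ray (0,∞). -/
def onPositiveRay (p : (ℂ × ℂ) × (ℂ × ℂ)) : Prop :=
  ∃ c : ℝ, 0 < c ∧ hermPairing p = (c : ℂ)

theorem Complex.arg_exp_mul_I_mul_eq_zero_iff {c : ℂ} (hc : c ≠ 0) (θ : ℝ) :
    arg (exp (θ * I) * c) = 0 ↔ ∃ n : ℤ, θ + arg c = n * (2 * Real.pi) := by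
  rw [← Real.Angle.toReal_zero, ← arg_coe_angle_eq_iff_eq_toReal,
    arg_mul_coe_angle (exp_ne_zero _) hc, arg_exp_mul_I, Real.Angle.coe_toIocMod,
    ← Real.Angle.coe_add, Real.Angle.coe_eq_zero_iff]
  simp only [zsmul_eq_mul, eq_comm]

open ComplexOrder in
theorem Complex.exists_pos_eq_ofReal_iff_arg_eq_zero {z : ℂ} (hz : z ≠ 0) :
    (∃ c : ℝ, 0 < c ∧ z = c) ↔ arg z = 0 := by
  rw [arg_eq_zero_iff_zero_le]
  constructor
  · rintro ⟨c, hc, rfl⟩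
    exact zero_le_real.mpr hc.le
  · intro h
    obtain ⟨c, rfl⟩ : ∃ c : ℝ, z = c := ⟨z.re, eq_re_of_ofReal_le (r := 0) (by simpa using h)⟩
    exact ⟨c, lt_of_le_of_ne (zero_le_real.mp h) (by rintro rfl; simp at hz), rfl⟩

theorem exists_int_mul_add_eq_iff {ω θ L s : ℝ} (hω : ω ≠ 0) :
    (∃ n : ℤ, ω * s + θ = n * L) ↔ ∃ k : ℤ, s = -θ / ω + k * (L / |ω|) := by
  have solve (n : ℤ) : ω * s + θ = n * L ↔ s = -θ / ω + n * (L / ω) := by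
    field_simp
    constructor <;> intro h <;> linarith
  simp_rw [solve]
  rcases abs_choice ω with h | h
  · rw [h]
  · rw [h]
    constructor <;> rintro ⟨n, hn⟩ <;> exact ⟨-n, by rw [hn]; push_cast; ring⟩

theorem tendsto_div_of_abs_sub_mul_le {f : ℝ → ℝ} {c C : ℝ}
    (h : ∀ᶠ T in atTop, |f T - c * T| ≤ C) :
    Tendsto (fun T => f T / T) atTop (nhds c) := by
  have hdev : Tendsto (fun T => (f T - c * T) / T) atTop (nhds 0) := by
    refine squeeze_zero_norm' ?_ ((tendsto_const_nhds (x := C)).div_atTop tendsto_id)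
    filter_upwards [h, eventually_gt_atTop 0] with T hT hT0
    rw [norm_div, Real.norm_of_nonneg hT0.le]
    exact div_le_div_of_nonneg_right hT hT0.le
  refine (by simpa using hdev.const_add c : Tendsto _ _ (nhds c)).congr' ?_
  filter_upwards [eventually_ne_atTop 0] with T hT
  field_simp
  ring

section Progression

variable {A P : ℝ}

theorem existsUnique_progression_mem_Ico (hP : 0 < P) (t₀ : ℝ) :
    ∃! t : ℝ, t ∈ Set.Ico t₀ (t₀ + P) ∧ ∃ k : ℤ, t = A + k * P := by
  obtain ⟨m, hm, hm_unique⟩ := existsUnique_add_zsmul_mem_Ico hP A t₀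
  refine ⟨A + m * P, ⟨by rwa [← zsmul_eq_mul], m, rfl⟩, ?_⟩
  rintro t ⟨ht, k, rfl⟩
  rw [hm_unique k (by simpa only [zsmul_eq_mul])]

theorem natCard_progression_Ioc (hP : 0 < P) (T : ℝ) :
    Nat.card {s : ℝ // s ∈ Set.Ioc 0 T ∧ ∃ k : ℤ, s = A + k * P} =
      (⌊(T - A) / P⌋ - ⌊-A / P⌋).toNat := by
  have hinj : Function.Injective (fun k : ℤ => A + k * P) := fun k l h => by
    exact_mod_cast mul_right_cancel₀ hP.ne' (add_left_cancel h)
  have hset : {s : ℝ | s ∈ Set.Ioc 0 T ∧ ∃ k : ℤ, s = A + k * P} =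
      (fun k : ℤ => A + k * P) '' ↑(Finset.Ioc ⌊-A / P⌋ ⌊(T - A) / P⌋) := by
    ext s
    simp only [Set.mem_ofPred_eq, Set.mem_image, Finset.coe_Ioc, Set.mem_Ioc, Int.floor_lt,
      Int.le_floor, div_lt_iff₀ hP, le_div_iff₀ hP]
    constructor
    · rintro ⟨⟨hs0, hsT⟩, k, rfl⟩
      exact ⟨k, ⟨by linarith, by linarith⟩, rfl⟩
    · rintro ⟨k, ⟨hk0, hkT⟩, rfl⟩
      exact ⟨⟨by linarith, by linarith⟩, k, rfl⟩
  rw [← Set.coe_ofPred, Nat.card_coe_set_eq, hset, Set.ncard_image_of_injective _ hinj,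
    Set.ncard_coe_finset, Int.card_Ioc]

theorem abs_natCard_progression_Ioc_sub_lt (hP : 0 < P) {T : ℝ} (hT : 0 ≤ T) :
    |(Nat.card {s : ℝ // s ∈ Set.Ioc 0 T ∧ ∃ k : ℤ, s = A + k * P} : ℝ) - P⁻¹ * T| < 1 := by
  have hmono : ⌊-A / P⌋ ≤ ⌊(T - A) / P⌋ := Int.floor_mono (by gcongr; linarith)
  rw [natCard_progression_Ioc hP, ← Int.cast_natCast, Int.toNat_of_nonneg (by omega)]
  have := Int.floor_le ((T - A) / P)
  have := Int.lt_floor_add_one ((T - A) / P)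
  have := Int.floor_le (-A / P)
  have := Int.lt_floor_add_one (-A / P)
  have hsplit : P⁻¹ * T = (T - A) / P - -A / P := by field_simp; ring
  rw [abs_lt, hsplit]
  push_cast
  constructor <;> linarith

theorem tendsto_natCard_progression_Ioc_div (hP : 0 < P) :
    Tendsto (fun T : ℝ => (Nat.card {s : ℝ // s ∈ Set.Ioc 0 T ∧ ∃ k : ℤ, s = A + k * P} : ℝ) / T)
      atTop (nhds P⁻¹) :=
  tendsto_div_of_abs_sub_mul_le (C := 1) <| (eventually_ge_atTop 0).mono fun _ hT =>
    (abs_natCard_progression_Ioc_sub_lt hP hT).le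

end Progression

theorem hermPairing_hopfFlow (a b t : ℝ) (p : (ℂ × ℂ) × (ℂ × ℂ)) :
    hermPairing (hopfFlow a b t p) = exp (I * ((a - b) * t : ℝ)) * hermPairing p := by
  have hconj : (starRingEnd ℂ) (exp (I * (b * t : ℝ))) = exp (-(I * (b * t : ℝ))) := by
    rw [← exp_conj, map_mul, conj_I, conj_ofReal, neg_mul]
  have hrot : exp (I * ((a - b) * t : ℝ)) = exp (I * (a * t : ℝ)) * exp (-(I * (b * t : ℝ))) := by
    rw [← exp_add]
    push_cast
    ring_nf
  simp only [hermPairing, hopfFlow, map_mul, hconj, hrot]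
  ring

theorem onPositiveRay_hopfFlow_iff {a b : ℝ} (hab : a ≠ b) {p : (ℂ × ℂ) × (ℂ × ℂ)}
    (hp : hermPairing p ≠ 0) (s : ℝ) :
    onPositiveRay (hopfFlow a b s p) ↔
      ∃ k : ℤ, s = -arg (hermPairing p) / (a - b) + k * (2 * Real.pi / |a - b|) := by
  have hne : hermPairing (hopfFlow a b s p) ≠ 0 := by
    rw [hermPairing_hopfFlow]
    exact mul_ne_zero (exp_ne_zero _) hp
  rw [onPositiveRay, exists_pos_eq_ofReal_iff_arg_eq_zero hne, hermPairing_hopfFlow, mul_comm I,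
    arg_exp_mul_I_mul_eq_zero_iff hp, exists_int_mul_add_eq_iff (sub_ne_zero.mpr hab)]

theorem hopf_flow_linking_with_N
    (a b : ℝ) :
    (∀ (t : ℝ) (p : (ℂ × ℂ) × (ℂ × ℂ)),
        hermPairing (hopfFlow a b t p) =
          Complex.exp (Complex.I * ((a - b) * t : ℝ)) * hermPairing p) ∧
    (∀ p : (ℂ × ℂ) × (ℂ × ℂ), p ∈ sphere3 ×ˢ sphere3 → a ≠ b →
      hermPairing p ≠ 0 →
      (∀ t₀ : ℝ, ∃! t : ℝ,
          t ∈ Set.Ico t₀ (t₀ + 2 * Real.pi / |a - b|) ∧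
          onPositiveRay (hopfFlow a b t p)) ∧
      Tendsto (fun T : ℝ =>
          (if a > b then (1 : ℝ) else -1) *
            (Nat.card {s : ℝ // s ∈ Set.Ioc 0 T ∧ onPositiveRay (hopfFlow a b s p)}) / T)
        atTop (nhds ((a - b) / (2 * Real.pi)))) := by
  refine ⟨hermPairing_hopfFlow a b, fun p _ hab hp => ?_⟩
  have hperiod : 0 < 2 * Real.pi / |a - b| := by
    have := abs_pos.mpr (sub_ne_zero.mpr hab)
    positivity
  have hrate : (if a > b then (1 : ℝ) else -1) * (2 * Real.pi / |a - b|)⁻¹ =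
      (a - b) / (2 * Real.pi) := by
    rw [inv_div]
    split_ifs with h
    · rw [abs_of_pos (sub_pos.mpr h), one_mul]
    · rw [abs_of_neg (sub_neg.mpr (lt_of_le_of_ne (not_lt.mp h) hab))]
      ring
  simp_rw [onPositiveRay_hopfFlow_iff hab hp, ← hrate]
  exact ⟨existsUnique_progression_mem_Ico hperiod,
    ((tendsto_natCard_progression_Ioc_div hperiod).const_mul _).congr
      fun T => (mul_div_assoc _ _ _).symm⟩
end

section
/- Let α be a 1-form on a manifold M satisfying the integrability condition α ∧ dα = 0, and suppose dα = α ∧ β for a 1-form β. Then the 3-form β ∧ dβ is closed: d(β ∧ dβ) = 0. -/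
/-!
Differentiating `dα = α ∧ β` gives `0 = dα ∧ β - α ∧ dβ = -α ∧ dβ`, since `β ∧ β = 0`.
As `dβ ∧ α = α ∧ dβ = 0`, the division property gives `dβ = α ∧ γ` for a 1-form `γ`, and then
`d(β ∧ dβ) = dβ ∧ dβ = α ∧ γ ∧ α ∧ γ = -α ∧ α ∧ γ ∧ γ = 0`.
-/

section GradedDifferentialAlgebra

variable {A : Type*} [Ring A] [Algebra ℝ A] (Gr : ℕ → Submodule ℝ A)

def IsGradedCommutative : Prop :=
  ∀ (i j : ℕ) (x y : A), x ∈ Gr i → y ∈ Gr j → y * x = ((-1 : ℝ) ^ (i * j)) • (x * y)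

def IsGradedDerivation (d : A →ₗ[ℝ] A) : Prop :=
  ∀ (i : ℕ) (x y : A), x ∈ Gr i → d (x * y) = d x * y + ((-1 : ℝ) ^ i) • (x * d y)

variable {Gr}

theorem IsGradedCommutative.mul_self_eq_zero (hcomm : IsGradedCommutative Gr) {x : A}
    (hx : x ∈ Gr 1) : x * x = 0 :=
  have : IsAddTorsionFree A := .of_isTorsionFree ℝ A
  self_eq_neg.mp (by simpa using hcomm 1 1 x x hx hx)

theorem IsGradedCommutative.mul_mul_self_eq_zero (hcomm : IsGradedCommutative Gr) {x y : A}
    (hx : x ∈ Gr 1) (hy : y ∈ Gr 1) : x * y * (x * y) = 0 := by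
  have hyx : y * x = -(x * y) := by simpa using hcomm 1 1 x y hx hy
  calc x * y * (x * y) = x * (y * x) * y := by noncomm_ring
    _ = -(x * x * y * y) := by rw [hyx]; noncomm_ring
    _ = 0 := by rw [hcomm.mul_self_eq_zero hx]; simp

theorem IsGradedDerivation.d_mul_d_self {d : A →ₗ[ℝ] A} (hleib : IsGradedDerivation Gr d)
    (hd2 : ∀ x : A, d (d x) = 0) {i : ℕ} {x : A} (hx : x ∈ Gr i) :
    d (x * d x) = d x * d x := by
  simp [hleib i x (d x) hx, hd2]

theorem IsGradedDerivation.mul_d_eq_zero_of_d_eq_mul {d : A →ₗ[ℝ] A}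
    (hleib : IsGradedDerivation Gr d) (hd2 : ∀ x : A, d (d x) = 0)
    (hcomm : IsGradedCommutative Gr) {a b : A} (ha : a ∈ Gr 1) (hb : b ∈ Gr 1)
    (hab : d a = a * b) : a * d b = 0 := by
  have h := hd2 a
  rw [hab, hleib 1 a b ha, hab, mul_assoc, hcomm.mul_self_eq_zero hb] at h
  simpa using h

end GradedDifferentialAlgebra

theorem godbillon_vey_form_closed_general
    (A : Type) [Ring A] [Algebra ℝ A]
    (Gr : ℕ → Submodule ℝ A)
    (d : A →ₗ[ℝ] A)
    (hd2 : ∀ x : A, d (d x) = 0)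
    (hdmem : ∀ (j : ℕ) (x : A), x ∈ Gr j → d x ∈ Gr (j + 1))
    (hleib : ∀ (i : ℕ) (x y : A), x ∈ Gr i →
      d (x * y) = d x * y + ((-1 : ℝ) ^ i) • (x * d y))
    (hcomm : ∀ (i j : ℕ) (x y : A), x ∈ Gr i → y ∈ Gr j →
      y * x = ((-1 : ℝ) ^ (i * j)) • (x * y))
    (a b : A) (ha : a ∈ Gr 1) (hb : b ∈ Gr 1)
    (hstruct : d a = a * b)                                -- da = a ∧ b
    (hdiv : ∀ (k : ℕ) (ω : A), ω ∈ Gr k → ω * a = 0 →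
      ∃ γ ∈ Gr (k - 1), ω = a * γ) :                       -- division property of a
    d (b * d b) = 0 := by
  have hdb : d b ∈ Gr 2 := hdmem 1 b hb
  have hadb : a * d b = 0 :=
    IsGradedDerivation.mul_d_eq_zero_of_d_eq_mul hleib hd2 hcomm ha hb hstruct
  have hdba : d b * a = 0 := by simpa [hadb] using hcomm 1 2 a (d b) ha hdb
  obtain ⟨γ, hγ, hdb_eq⟩ := hdiv 2 (d b) hdb hdba
  rw [IsGradedDerivation.d_mul_d_self hleib hd2 hb, hdb_eq]
  exact IsGradedCommutative.mul_mul_self_eq_zero hcomm ha hγ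

theorem godbillon_vey_form_closed
    (A : Type) [Ring A] [Algebra ℝ A]
    (Gr : ℕ → Submodule ℝ A)
    (d : A →ₗ[ℝ] A)
    (hd2 : ∀ x : A, d (d x) = 0)
    (hdmem : ∀ (j : ℕ) (x : A), x ∈ Gr j → d x ∈ Gr (j + 1))
    (hmul : ∀ (i j : ℕ) (x y : A), x ∈ Gr i → y ∈ Gr j → x * y ∈ Gr (i + j))
    (hleib : ∀ (i : ℕ) (x y : A), x ∈ Gr i →
      d (x * y) = d x * y + ((-1 : ℝ) ^ i) • (x * d y))
    (hcomm : ∀ (i j : ℕ) (x y : A), x ∈ Gr i → y ∈ Gr j →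
      y * x = ((-1 : ℝ) ^ (i * j)) • (x * y))
    (a b : A) (ha : a ∈ Gr 1) (hb : b ∈ Gr 1)
    (hint : a * d a = 0)                                   -- integrability a ∧ da = 0
    (hstruct : d a = a * b)                                -- da = a ∧ b
    (hdiv : ∀ (k : ℕ) (ω : A), ω ∈ Gr k → ω * a = 0 →
      ∃ γ ∈ Gr (k - 1), ω = a * γ) :                       -- division property of a
    d (b * d b) = 0 :=
  godbillon_vey_form_closed_general A Gr d hd2 hdmem hleib hcomm a b ha hb hstruct hdiv
end
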